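/- Let σ > -1, μ > -1 be real numbers and ρ ∈ ℕ. Then for t → 0⁺ (t < 1), ∫₀^t τ^σ (log τ)^{-ρ} (t - τ)^μ dτ = C · t^{σ+μ+1} (log t)^{-ρ} + O(t^{σ+μ+1} (log t)^{-ρ-1}), for some constant C depending only on σ and μ. -/

import Mathlib

open Real Filter Topology MeasureTheory Set Asymptotics

private lemma inv_pow_sub_inv_pow_le (ρ : ℕ) {a b : ℝ} (hb : 0 < b) (hab : b ≤ a) :
    (b ^ ρ)⁻¹ - (a ^ ρ)⁻¹ ≤ ρ * (a - b) * (b ^ (ρ + 1))⁻¹ := by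
  have ha : 0 < a := hb.trans_le hab
  induction ρ with
  | zero => simp
  | succ n ih =>
    have hbn : (0:ℝ) < b ^ n := pow_pos hb n
    have han : (0:ℝ) < a ^ n := pow_pos ha n
    have hbn1 : (0:ℝ) < b ^ (n+1) := pow_pos hb _
    have hbn2 : (0:ℝ) < b ^ (n+2) := pow_pos hb _
    have han1 : (0:ℝ) < a ^ (n+1) := pow_pos ha _
    have h1 : (b ^ (n+1))⁻¹ - (a ^ (n+1))⁻¹
        = b⁻¹ * ((b ^ n)⁻¹ - (a ^ n)⁻¹) + (a ^ n)⁻¹ * (b⁻¹ - a⁻¹) := by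
      field_simp
      ring
    have h2 : b⁻¹ * ((b ^ n)⁻¹ - (a ^ n)⁻¹) ≤ (n : ℝ) * (a - b) * (b ^ (n+2))⁻¹ := by
      calc b⁻¹ * ((b ^ n)⁻¹ - (a ^ n)⁻¹) ≤ b⁻¹ * ((n : ℝ) * (a - b) * (b ^ (n+1))⁻¹) :=
            mul_le_mul_of_nonneg_left ih (by positivity)
        _ = (n : ℝ) * (a - b) * (b ^ (n+2))⁻¹ := by
            rw [pow_succ]; field_simp
            ring
    have h3 : (a ^ n)⁻¹ * (b⁻¹ - a⁻¹) ≤ (a - b) * (b ^ (n+2))⁻¹ := by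
      have e1 : b⁻¹ - a⁻¹ = (a - b) / (a * b) := by
        rw [inv_sub_inv hb.ne' ha.ne', mul_comm]
      have e2 : (a ^ n)⁻¹ ≤ (b ^ n)⁻¹ := by gcongr
      have e3 : (a - b) / (a * b) ≤ (a - b) / (b * b) :=
        div_le_div_of_nonneg_left (by linarith) (by positivity) (by nlinarith)
      have e4 : 0 ≤ (a - b) / (a * b) := div_nonneg (by linarith) (by positivity)
      calc (a ^ n)⁻¹ * (b⁻¹ - a⁻¹) ≤ (b ^ n)⁻¹ * ((a - b) / (b * b)) := by
            rw [e1]; exact mul_le_mul e2 e3 e4 (by positivity)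
        _ = (a - b) * (b ^ (n+2))⁻¹ := by
            field_simp
            ring
    have : (b ^ (n+1))⁻¹ - (a ^ (n+1))⁻¹ ≤ ((n : ℝ) + 1) * (a - b) * (b ^ (n+2))⁻¹ := by
      rw [h1]; nlinarith [h2, h3]
    simpa [Nat.cast_succ] using this

private lemma neg_log_le_aux {s ε : ℝ} (hs : 0 < s) (hε : 0 < ε) :
    -Real.log s ≤ ε⁻¹ * s ^ (-ε) := by
  have h2 : (0:ℝ) < s ^ (-ε) := rpow_pos_of_pos hs _
  have h1 : Real.log (s ^ (-ε)) ≤ s ^ (-ε) - 1 := Real.log_le_sub_one_of_pos h2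
  rw [Real.log_rpow hs] at h1
  rw [inv_mul_eq_div, le_div_iff₀ hε]
  nlinarith [h1]

private lemma integrableOn_of_bound {f g : ℝ → ℝ} {s : Set ℝ} (hs : MeasurableSet s)
    (hg : IntegrableOn g s) (hf : Measurable f)
    (h : ∀ x ∈ s, |f x| ≤ |g x|) : IntegrableOn f s :=
  MeasureTheory.Integrable.mono hg hf.aestronglyMeasurable.restrict
    ((ae_restrict_iff' hs).2 (ae_of_all _ (by simpa [Real.norm_eq_abs] using h)))

private lemma betaIntegrableOn {σ μ : ℝ} (hσ : -1 < σ) (hμ : -1 < μ) :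
    IntegrableOn (fun s : ℝ => s ^ σ * (1 - s) ^ μ) (Ioc (0:ℝ) 1) := by
  have hbdd : ∀ r : ℝ, ∀ x : ℝ, (1/2:ℝ) ≤ x → x ≤ 1 → x ^ r ≤ max 1 ((1/2:ℝ) ^ r) := by
    intro r x hx hx1
    rcases le_or_gt 0 r with hr | hr
    · exact le_max_of_le_left (Real.rpow_le_one (by linarith) hx1 hr)
    · exact le_max_of_le_right (Real.rpow_le_rpow_of_nonpos (by norm_num) hx hr.le)
  have hm := fun (σ μ : ℝ) => show Measurable (fun s : ℝ => s ^ σ * (1 - s) ^ μ) by fun_prop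
  have h1 : IntegrableOn (fun s : ℝ => s ^ σ) (Ioc (0:ℝ) (1/2)) := by
    have := intervalIntegral.intervalIntegrable_rpow' (a := (0:ℝ)) (b := 1/2) hσ
    rwa [intervalIntegrable_iff_integrableOn_Ioc_of_le (by norm_num)] at this
  have h2 : IntegrableOn (fun s : ℝ => (1 - s) ^ μ) (Ioc (1/2:ℝ) 1) := by
    have h := (intervalIntegral.intervalIntegrable_rpow' (a := (0:ℝ)) (b := 1/2) hμ).comp_sub_left 1
    rw [show (1:ℝ) - 0 = 1 by norm_num, show (1:ℝ) - 1/2 = 1/2 by norm_num] at h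
    have h := h.symm
    rwa [intervalIntegrable_iff_integrableOn_Ioc_of_le (by norm_num)] at h
  have I1 : IntegrableOn (fun s : ℝ => s ^ σ * (1 - s) ^ μ) (Ioc (0:ℝ) (1/2)) := by
    refine integrableOn_of_bound measurableSet_Ioc (h1.const_mul (max 1 ((1/2:ℝ) ^ μ))) (hm σ μ)
      (fun x hx => ?_)
    have hx0 : 0 < x := hx.1
    have hx2 : x ≤ 1/2 := hx.2
    have hxp : (0:ℝ) ≤ x ^ σ := rpow_nonneg hx0.le _
    have hb : (1 - x) ^ μ ≤ max 1 ((1/2:ℝ) ^ μ) := hbdd μ (1-x) (by linarith) (by linarith)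
    have h1x : (0:ℝ) ≤ (1 - x) ^ μ := rpow_nonneg (by linarith) _
    rw [abs_of_nonneg (mul_nonneg hxp h1x), abs_of_nonneg (by positivity)]
    calc x ^ σ * (1 - x) ^ μ ≤ x ^ σ * max 1 ((1/2:ℝ) ^ μ) := by
          exact mul_le_mul_of_nonneg_left hb hxp
      _ = max 1 ((1/2:ℝ) ^ μ) * x ^ σ := by ring
  have I2 : IntegrableOn (fun s : ℝ => s ^ σ * (1 - s) ^ μ) (Ioc (1/2:ℝ) 1) := by
    refine integrableOn_of_bound measurableSet_Ioc (h2.const_mul (max 1 ((1/2:ℝ) ^ σ))) (hm σ μ)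
      (fun x hx => ?_)
    have hx0 : (1/2:ℝ) < x := hx.1
    have hx2 : x ≤ 1 := hx.2
    have hxp : (0:ℝ) ≤ x ^ σ := rpow_nonneg (by linarith) _
    have h1x : (0:ℝ) ≤ (1 - x) ^ μ := rpow_nonneg (by linarith) _
    have hb : x ^ σ ≤ max 1 ((1/2:ℝ) ^ σ) := hbdd σ x hx0.le hx2
    rw [abs_of_nonneg (mul_nonneg hxp h1x), abs_of_nonneg (by positivity)]
    exact mul_le_mul_of_nonneg_right hb h1x
  have := I1.union I2
  rwa [Ioc_union_Ioc_eq_Ioc (by norm_num) (by norm_num)] at this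

private lemma logBetaIntegrableOn {σ μ : ℝ} (hσ : -1 < σ) (hμ : -1 < μ) :
    IntegrableOn (fun s : ℝ => s ^ σ * (-Real.log s) * (1 - s) ^ μ) (Ioc (0:ℝ) 1) := by
  set ε : ℝ := (σ + 1)/2 with hε
  have hε0 : 0 < ε := by rw [hε]; linarith
  have hσ' : -1 < σ - ε := by rw [hε]; linarith
  refine integrableOn_of_bound measurableSet_Ioc
    ((betaIntegrableOn hσ' hμ).const_mul ε⁻¹)
    (((show Measurable (fun s : ℝ => s ^ σ) by fun_prop).mul Real.measurable_log.neg).mul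
      (show Measurable (fun s : ℝ => (1 - s) ^ μ) by fun_prop)) (fun x hx => ?_)
  have hx0 : 0 < x := hx.1
  have hx1 : x ≤ 1 := hx.2
  have hlog : 0 ≤ -Real.log x := by
    simpa using Real.log_nonpos hx0.le hx1
  have hxp : (0:ℝ) ≤ x ^ σ := rpow_nonneg hx0.le _
  have h1x : (0:ℝ) ≤ (1 - x) ^ μ := rpow_nonneg (by linarith) _
  rw [abs_of_nonneg (mul_nonneg (mul_nonneg hxp hlog) h1x), abs_of_nonneg (by positivity)]
  have key : x ^ σ * (-Real.log x) ≤ ε⁻¹ * x ^ (σ - ε) := by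
    calc x ^ σ * (-Real.log x) ≤ x ^ σ * (ε⁻¹ * x ^ (-ε)) :=
          mul_le_mul_of_nonneg_left (neg_log_le_aux hx0 hε0) hxp
      _ = ε⁻¹ * x ^ (σ - ε) := by
          rw [show σ - ε = σ + (-ε) by ring, Real.rpow_add hx0]; ring
  calc x ^ σ * (-Real.log x) * (1 - x) ^ μ ≤ (ε⁻¹ * x ^ (σ - ε)) * (1 - x) ^ μ :=
        mul_le_mul_of_nonneg_right key h1x
    _ = ε⁻¹ * (x ^ (σ - ε) * (1 - x) ^ μ) := by ring

private lemma inv_pow_log_bound (ρ : ℕ) {x y : ℝ} (hx : x < 0) (hyx : y ≤ x) :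
    |((y:ℝ) ^ ρ)⁻¹ - (x ^ ρ)⁻¹| ≤ ρ * (x - y) * ((-x) ^ (ρ+1))⁻¹ := by
  have hb : 0 < -x := by linarith
  have hab : -x ≤ -y := by linarith
  have e0 : ∀ z : ℝ, (z ^ ρ)⁻¹ = (-1:ℝ)^ρ * ((-z) ^ ρ)⁻¹ := by
    intro z
    rw [show z = -(-z) by ring, neg_pow, mul_inv, ← inv_pow, inv_neg, inv_one]
    rw [show -(- -z) = -z by ring]
  rw [e0 y, e0 x, ← mul_sub, abs_mul, abs_pow, abs_neg, abs_one, one_pow, one_mul]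
  have h3 : ((-y:ℝ)^ρ)⁻¹ ≤ ((-x)^ρ)⁻¹ :=
    inv_anti₀ (pow_pos hb ρ) (pow_le_pow_left₀ hb.le hab ρ)
  rw [abs_sub_comm, abs_of_nonneg (sub_nonneg.2 h3)]
  have := inv_pow_sub_inv_pow_le ρ hb hab
  calc ((-x:ℝ) ^ ρ)⁻¹ - ((-y) ^ ρ)⁻¹ ≤ ρ * (-y - -x) * ((-x) ^ (ρ+1))⁻¹ := this
    _ = ρ * (x - y) * ((-x) ^ (ρ+1))⁻¹ := by ring

/-- Beta-type convolution integral with logarithmic weight: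
`∫₀^t τ^σ (log τ)^{-ρ} (t-τ)^μ dτ = C t^{σ+μ+1}(log t)^{-ρ} + O(t^{σ+μ+1}(log t)^{-ρ-1})`
as `t → 0⁺`, for some constant `C` depending only on `σ` and `μ`. -/
theorem integral_beta_log_asymptotics (σ μ : ℝ) (hσ : -1 < σ) (hμ : -1 < μ) (ρ : ℕ) :
    ∃ C : ℝ,
      (fun t : ℝ => (∫ τ in Ioc (0 : ℝ) t, τ ^ σ * (Real.log τ) ^ (-(ρ : ℤ)) * (t - τ) ^ μ) -
          C * t ^ (σ + μ + 1) * (Real.log t) ^ (-(ρ : ℤ)))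
        =O[𝓝[Ioo (0 : ℝ) 1] 0]
          fun t : ℝ => t ^ (σ + μ + 1) * (Real.log t) ^ (-(ρ : ℤ) - 1) := by
  classical
  set B : ℝ := ∫ s in Ioc (0:ℝ) 1, s ^ σ * (1 - s) ^ μ with hB
  set J : ℝ := ∫ s in Ioc (0:ℝ) 1, s ^ σ * (-Real.log s) * (1 - s) ^ μ with hJ
  refine ⟨B, ?_⟩
  rw [isBigO_iff]
  refine ⟨ρ * J, ?_⟩
  filter_upwards [self_mem_nhdsWithin] with t ht
  obtain ⟨ht0, ht1⟩ := ht
  have hlogt : Real.log t < 0 := Real.log_neg ht0 ht1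
  set L : ℝ := -Real.log t with hLdef
  have hL : 0 < L := by simp only [hLdef]; linarith
  -- substitution τ = t s
  have hsub : ∀ F : ℝ → ℝ, (∫ τ in Ioc (0:ℝ) t, F τ) = t * ∫ s in Ioc (0:ℝ) 1, F (t * s) := by
    intro F
    have h := intervalIntegral.integral_comp_mul_left (a := (0:ℝ)) (b := 1) F ht0.ne'
    rw [mul_zero, mul_one, intervalIntegral.integral_of_le zero_le_one,
      intervalIntegral.integral_of_le ht0.le, smul_eq_mul] at h
    rw [h]
    field_simp
  have hz : ∀ x : ℝ, x ^ (-(ρ:ℤ)) = (x ^ ρ)⁻¹ := fun x => by rw [zpow_neg, zpow_natCast]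
  have hz1 : ∀ x : ℝ, x ^ (-(ρ:ℤ) - 1) = (x ^ (ρ+1))⁻¹ := fun x => by
    rw [show -(ρ:ℤ) - 1 = -(((ρ+1 : ℕ)) : ℤ) by push_cast; ring, zpow_neg, zpow_natCast]
  simp only [hz, hz1]
  have hI1 : IntegrableOn (fun s : ℝ => s ^ σ * (1 - s) ^ μ) (Ioc (0:ℝ) 1) :=
    betaIntegrableOn hσ hμ
  have hI2 : IntegrableOn (fun s : ℝ => s ^ σ * (-Real.log s) * (1 - s) ^ μ) (Ioc (0:ℝ) 1) :=
    logBetaIntegrableOn hσ hμ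
  set G : ℝ → ℝ := fun s => s ^ σ * ((Real.log (t * s)) ^ ρ)⁻¹ * (1 - s) ^ μ with hGdef
  have hlogts : ∀ s ∈ Ioc (0:ℝ) 1, Real.log (t * s) ≤ Real.log t := by
    intro s hs
    rw [Real.log_mul ht0.ne' hs.1.ne']
    nlinarith [Real.log_nonpos hs.1.le hs.2]
  have hlogts' : ∀ s ∈ Ioc (0:ℝ) 1, Real.log t - Real.log (t * s) = -Real.log s := by
    intro s hs
    rw [Real.log_mul ht0.ne' hs.1.ne']
    ring
  set c₀ : ℝ := ((Real.log t) ^ ρ)⁻¹ with hc₀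
  -- integrability of G
  have hI3 : IntegrableOn G (Ioc (0:ℝ) 1) := by
    refine integrableOn_of_bound measurableSet_Ioc (hI1.const_mul ((L^ρ)⁻¹)) ?_ (fun s hs => ?_)
    · exact ((show Measurable fun s:ℝ => s ^ σ by fun_prop).mul
        (((Real.measurable_log.comp (measurable_const_mul t)).pow_const ρ).inv)).mul
        (show Measurable fun s:ℝ => (1 - s) ^ μ by fun_prop)
    · have hs0 : 0 < s := hs.1
      have hs1 : s ≤ 1 := hs.2
      have hxp : (0:ℝ) ≤ s ^ σ := rpow_nonneg hs0.le _
      have h1x : (0:ℝ) ≤ (1 - s) ^ μ := rpow_nonneg (by linarith) _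
      have hlts : Real.log (t * s) ≤ Real.log t := hlogts s hs
      have hLle : L ≤ -Real.log (t * s) := by simp only [hLdef]; linarith
      have habs : |((Real.log (t * s)) ^ ρ)⁻¹| ≤ (L ^ ρ)⁻¹ := by
        rw [abs_inv, abs_pow, abs_of_neg (by linarith : Real.log (t * s) < 0)]
        exact inv_anti₀ (pow_pos hL ρ) (pow_le_pow_left₀ hL.le hLle ρ)
      have := abs_nonneg (((Real.log (t * s)) ^ ρ)⁻¹)
      simp only [hGdef]
      rw [abs_mul, abs_mul, abs_of_nonneg hxp, abs_of_nonneg h1x,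
        abs_of_nonneg (by positivity : (0:ℝ) ≤ (L^ρ)⁻¹ * (s ^ σ * (1 - s) ^ μ))]
      calc s ^ σ * |((Real.log (t * s)) ^ ρ)⁻¹| * (1 - s) ^ μ
          ≤ s ^ σ * (L ^ ρ)⁻¹ * (1 - s) ^ μ := by
            apply mul_le_mul_of_nonneg_right (mul_le_mul_of_nonneg_left habs hxp) h1x
        _ = (L^ρ)⁻¹ * (s ^ σ * (1 - s) ^ μ) := by ring
  -- substitution identity
  have key1 : (∫ τ in Ioc (0:ℝ) t, τ ^ σ * ((Real.log τ) ^ ρ)⁻¹ * (t - τ) ^ μ)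
      = t ^ (σ + μ + 1) * ∫ s in Ioc (0:ℝ) 1, G s := by
    rw [hsub (fun τ => τ ^ σ * ((Real.log τ) ^ ρ)⁻¹ * (t - τ) ^ μ)]
    rw [setIntegral_congr_fun measurableSet_Ioc
      (g := fun s : ℝ => t ^ (σ + μ) * G s) ?_]
    · rw [MeasureTheory.integral_const_mul, ← mul_assoc]
      congr 1
      rw [show σ + μ + 1 = 1 + (σ + μ) by ring, Real.rpow_add ht0 1 (σ + μ), Real.rpow_one]
    · intro s hs
      have hs0 : 0 < s := hs.1
      have hs1 : s ≤ 1 := hs.2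
      simp only [hGdef]
      rw [Real.mul_rpow ht0.le hs0.le, show t - t * s = t * (1 - s) by ring,
        Real.mul_rpow ht0.le (by linarith), Real.rpow_add ht0]
      ring
  -- the constant term
  have key2 : B * t ^ (σ + μ + 1) * c₀
      = t ^ (σ + μ + 1) * ∫ s in Ioc (0:ℝ) 1, c₀ * (s ^ σ * (1 - s) ^ μ) := by
    rw [MeasureTheory.integral_const_mul, ← hB]
    ring
  rw [key1, key2, ← mul_sub,
    ← MeasureTheory.integral_sub hI3 (hI1.const_mul c₀)]
  -- bound the remaining integral
  have hDbound : ‖∫ s in Ioc (0:ℝ) 1, (G s - c₀ * (s ^ σ * (1 - s) ^ μ))‖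
      ≤ ∫ s in Ioc (0:ℝ) 1, (ρ * (L ^ (ρ+1))⁻¹) * (s ^ σ * (-Real.log s) * (1 - s) ^ μ) := by
    refine norm_integral_le_of_norm_le (hI2.const_mul _)
      ((ae_restrict_iff' measurableSet_Ioc).2 (ae_of_all _ (fun s hs => ?_)))
    have hs0 : 0 < s := hs.1
    have hs1 : s ≤ 1 := hs.2
    have hxp : (0:ℝ) ≤ s ^ σ := rpow_nonneg hs0.le _
    have h1x : (0:ℝ) ≤ (1 - s) ^ μ := rpow_nonneg (by linarith) _
    have hdiff : G s - c₀ * (s ^ σ * (1 - s) ^ μ)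
        = (s ^ σ * (1 - s) ^ μ) * (((Real.log (t * s)) ^ ρ)⁻¹ - ((Real.log t) ^ ρ)⁻¹) := by
      simp only [hGdef, hc₀]; ring
    rw [Real.norm_eq_abs, hdiff, abs_mul, abs_of_nonneg (mul_nonneg hxp h1x)]
    have hin := inv_pow_log_bound ρ hlogt (hlogts s hs)
    rw [hlogts' s hs] at hin
    calc (s ^ σ * (1 - s) ^ μ) * |((Real.log (t * s)) ^ ρ)⁻¹ - ((Real.log t) ^ ρ)⁻¹|
        ≤ (s ^ σ * (1 - s) ^ μ) * (ρ * (-Real.log s) * ((-Real.log t) ^ (ρ+1))⁻¹) :=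
          mul_le_mul_of_nonneg_left hin (mul_nonneg hxp h1x)
      _ = (ρ * (L ^ (ρ+1))⁻¹) * (s ^ σ * (-Real.log s) * (1 - s) ^ μ) := by
          simp only [hLdef]; ring
  -- finish
  have hrpos : (0:ℝ) ≤ t ^ (σ + μ + 1) := rpow_nonneg ht0.le _
  rw [Real.norm_eq_abs, Real.norm_eq_abs, abs_mul, abs_mul, abs_of_nonneg hrpos,
    abs_inv, abs_pow, abs_of_neg hlogt]
  calc t ^ (σ + μ + 1) * ‖∫ s in Ioc (0:ℝ) 1, (G s - c₀ * (s ^ σ * (1 - s) ^ μ))‖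
      ≤ t ^ (σ + μ + 1)
        * ∫ s in Ioc (0:ℝ) 1, (ρ * (L ^ (ρ+1))⁻¹) * (s ^ σ * (-Real.log s) * (1 - s) ^ μ) :=
        mul_le_mul_of_nonneg_left hDbound hrpos
    _ = ρ * J * (t ^ (σ + μ + 1) * ((-Real.log t) ^ (ρ+1))⁻¹) := by
        rw [MeasureTheory.integral_const_mul, ← hJ, ← hLdef]
        ring
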